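/- arXiv:1503.05775 — 2 statements merged into one kernel-verified Lean document; each statement's English description precedes it below -/
import Mathlib

section
/- For any template s, a point z belongs to the template escape set if and only if |ξ_n(z)| → ∞ as n → ∞; i.e., every unbounded template orbit tends to infinity in modulus. -/
open Complex

/-- The template orbit: `ξ 0 = z`, `ξ (n+1) = (ξ n)^2 + c_{s n}`. -/
noncomputable def tOrbit (c0 c1 : ℂ) (s : ℕ → Fin 2) (z : ℂ) : ℕ → ℂ
  | 0 => z
  | n + 1 => (tOrbit c0 c1 s z n) ^ 2 + (if s n = 0 then c0 else c1)

/-- The template prisoner set: points with bounded template orbit. -/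
def prisoner (c0 c1 : ℂ) (s : ℕ → Fin 2) : Set ℂ :=
  {z | ∃ M : ℝ, ∀ n, ‖tOrbit c0 c1 s z n‖ ≤ M}

/-- The template escape set: points with unbounded template orbit. -/
def escape (c0 c1 : ℂ) (s : ℕ → Fin 2) : Set ℂ :=
  {z | ¬ ∃ M : ℝ, ∀ n, ‖tOrbit c0 c1 s z n‖ ≤ M}

/-!
Let `K` bound `‖c0‖` and `‖c1‖`. Once an orbit point has modulus at least `R = K + 2`, the next
one is larger by at least `R`, since `‖ξ² + c‖ ≥ ‖ξ‖² - K`. Hence an orbit that ever leaves the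
disc of radius `R` grows at least linearly from then on; an unbounded orbit does leave it.
-/

open Filter

theorem tendsto_atTop_of_le_of_add_le {u : ℕ → ℝ} {R : ℝ} {N : ℕ} (hR : 0 < R)
    (hu : ∀ n, R ≤ u n → u n + R ≤ u (n + 1)) (hN : R ≤ u N) :
    Tendsto u atTop atTop := by
  have linear : ∀ k : ℕ, k * R + R ≤ u (k + N) := by
    intro k
    induction k with
    | zero => simpa using hN
    | succ k ih =>
      have hk : R ≤ u (k + N) := by nlinarith [k.cast_nonneg (α := ℝ)]
      rw [Nat.add_right_comm]
      push_cast
      linarith [hu (k + N) hk]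
  rw [← tendsto_add_atTop_iff_nat N]
  refine tendsto_atTop_mono linear ?_
  exact tendsto_atTop_add_const_right _ _ (tendsto_natCast_atTop_atTop.atTop_mul_const hR)

theorem norm_add_add_two_le_norm_sq_add {𝕜 : Type*} [SeminormedRing 𝕜] [NormMulClass 𝕜]
    {z c : 𝕜} {K : ℝ} (hc : ‖c‖ ≤ K) (hz : K + 2 ≤ ‖z‖) : ‖z‖ + (K + 2) ≤ ‖z ^ 2 + c‖ := by
  have hK : 0 ≤ K := (norm_nonneg c).trans hc
  have reverse_triangle : ‖z‖ ^ 2 - ‖c‖ ≤ ‖z ^ 2 + c‖ := by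
    rw [sq ‖z‖, ← norm_mul, ← sq]
    exact norm_sub_le_norm_add (z ^ 2) c
  nlinarith

theorem norm_tOrbit_add_le_norm_tOrbit_succ (c0 c1 : ℂ) (s : ℕ → Fin 2) (z : ℂ) (n : ℕ)
    (hn : max ‖c0‖ ‖c1‖ + 2 ≤ ‖tOrbit c0 c1 s z n‖) :
    ‖tOrbit c0 c1 s z n‖ + (max ‖c0‖ ‖c1‖ + 2) ≤ ‖tOrbit c0 c1 s z (n + 1)‖ := by
  have hc : ‖if s n = 0 then c0 else c1‖ ≤ max ‖c0‖ ‖c1‖ := by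
    split_ifs
    exacts [le_max_left _ _, le_max_right _ _]
  exact norm_add_add_two_le_norm_sq_add hc hn

theorem stmt5 (c0 c1 : ℂ) (s : ℕ → Fin 2) (z : ℂ) :
    z ∈ escape c0 c1 s ↔
      Filter.Tendsto (fun n => ‖tOrbit c0 c1 s z n‖) Filter.atTop Filter.atTop := by
  constructor
  · intro hz
    have unbounded : ∀ M, ∃ n, M < ‖tOrbit c0 c1 s z n‖ := by
      simpa [escape] using hz
    obtain ⟨N, hN⟩ := unbounded (max ‖c0‖ ‖c1‖ + 2)
    exact tendsto_atTop_of_le_of_add_le (by positivity)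
      (norm_tOrbit_add_le_norm_tOrbit_succ c0 c1 s z) hN.le
  · rintro h ⟨M, hM⟩
    obtain ⟨n, hn⟩ := (h.eventually_gt_atTop M).exists
    exact (hM n).not_gt hn
end

section
/- If z lies in the template escape set for template s, then there exists N ∈ ℕ such that z lies in the escape set for every template t agreeing with s on its first N entries; i.e., membership in the escape set is determined by a finite root of the template. -/
open Complex

/-!
Once an orbit point has norm `a > R := max 2 (max ‖c0‖ ‖c1‖)`, every later step increases the
norm by at least `a (a - 2) > 0` whatever the template entries, so the orbit escapes. An escaping
orbit for `s` crosses `R` at some time `N`, and up to time `N` the orbit only depends on the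
first `N` entries of the template.
-/

lemma norm_add_mul_sub_two_le_norm_sq_add {𝕜 : Type*} [NormedDivisionRing 𝕜] {x c : 𝕜} {a : ℝ}
    (ha : 1 ≤ a) (hc : ‖c‖ ≤ a) (hx : a ≤ ‖x‖) : ‖x‖ + a * (a - 2) ≤ ‖x ^ 2 + c‖ := by
  have hsub : ‖x‖ ^ 2 - ‖c‖ ≤ ‖x ^ 2 + c‖ := by
    have := norm_sub_le_norm_add (x ^ 2) c
    rwa [norm_pow] at this
  nlinarith

noncomputable def escapeRadius (c0 c1 : ℂ) : ℝ := max 2 (max ‖c0‖ ‖c1‖)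

section

variable {c0 c1 : ℂ} {s t : ℕ → Fin 2} {z : ℂ}

lemma norm_param_le_escapeRadius (b : Fin 2) :
    ‖if b = 0 then c0 else c1‖ ≤ escapeRadius c0 c1 := by
  unfold escapeRadius
  split_ifs <;> simp

lemma two_le_escapeRadius : 2 ≤ escapeRadius c0 c1 := le_max_left _ _

lemma add_mul_le_norm_tOrbit {N : ℕ} (hN : escapeRadius c0 c1 < ‖tOrbit c0 c1 t z N‖) (k : ℕ) :
    ‖tOrbit c0 c1 t z N‖ + k * (‖tOrbit c0 c1 t z N‖ * (‖tOrbit c0 c1 t z N‖ - 2))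
      ≤ ‖tOrbit c0 c1 t z (N + k)‖ := by
  set a := ‖tOrbit c0 c1 t z N‖
  have ha : 2 < a := two_le_escapeRadius.trans_lt hN
  induction k with
  | zero => simp [a]
  | succ k ih =>
    have hδ : 0 ≤ a * (a - 2) := by nlinarith
    have hstep := norm_add_mul_sub_two_le_norm_sq_add (x := tOrbit c0 c1 t z (N + k))
      (by linarith) ((norm_param_le_escapeRadius (t (N + k))).trans hN.le)
      (le_trans (by nlinarith) ih)
    rw [← add_assoc, tOrbit]
    push_cast
    linarith

lemma mem_escape_of_escapeRadius_lt_norm {N : ℕ}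
    (hN : escapeRadius c0 c1 < ‖tOrbit c0 c1 t z N‖) : z ∈ escape c0 c1 t := by
  rintro ⟨M, hM⟩
  set a := ‖tOrbit c0 c1 t z N‖
  have hδ : 0 < a * (a - 2) := by
    have := two_le_escapeRadius.trans_lt hN
    nlinarith
  obtain ⟨k, hk⟩ := exists_nat_gt ((M - a) / (a * (a - 2)))
  have hgrowth := add_mul_le_norm_tOrbit hN k
  rw [div_lt_iff₀ hδ] at hk
  linarith [hM (N + k)]

lemma exists_escapeRadius_lt_norm_tOrbit (hz : z ∈ escape c0 c1 s) :
    ∃ N, escapeRadius c0 c1 < ‖tOrbit c0 c1 s z N‖ := by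
  by_contra! h
  exact hz ⟨_, h⟩

lemma tOrbit_eq_of_forall_lt_eq {N : ℕ} (h : ∀ j < N, t j = s j) :
    ∀ n ≤ N, tOrbit c0 c1 t z n = tOrbit c0 c1 s z n
  | 0, _ => rfl
  | n + 1, hn => by
    rw [tOrbit, tOrbit, tOrbit_eq_of_forall_lt_eq h n (by omega), h n hn]

end

theorem stmt16 (c0 c1 : ℂ) (s : ℕ → Fin 2) (z : ℂ)
    (hz : z ∈ escape c0 c1 s) :
    ∃ N : ℕ, ∀ t : ℕ → Fin 2, (∀ j < N, t j = s j) → z ∈ escape c0 c1 t := by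
  obtain ⟨N, hN⟩ := exists_escapeRadius_lt_norm_tOrbit hz
  refine ⟨N, fun t ht => mem_escape_of_escapeRadius_lt_norm (N := N) ?_⟩
  rwa [tOrbit_eq_of_forall_lt_eq ht N le_rfl]
end
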